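/- Three-term contiguous relation (A&A comparison, fourth form): Let a,b,c,d,e ∈ ℂ with a,c,e ≠ 0, |bd/(qace)| < 1, and all denominators appearing below nonzero. Set Y_q = (a−b)(b−c)(b−e)(d−q)·d / [(1−b)(qa−d)·(qabce + bcd + bde − b²d − acde − qbce)] and Z_q = (1−a)(d−qb)(qace−bd) / [(qa−d)·(qabce + bcd + bde − b²d − acde − qbce)]. Then ₃φ₂(a,c,e; b,d; q, bd/(ace)) = Y_q·₃φ₂(a, c, e; qb, d/q; q, bd/(ace)) + Z_q·₃φ₂(qa, c, e; b, d; q, bd/(qace)). -/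

import Mathlib

noncomputable def qPoch (q x : ℂ) (k : ℕ) : ℂ :=
  ∏ i ∈ Finset.range k, (1 - x * q ^ i)

/-- The basic hypergeometric series ₃φ₂(a,c,e; b,d; q, z). -/
noncomputable def phi32 (q z a c e b d : ℂ) : ℂ :=
  ∑' k : ℕ, (qPoch q a k * qPoch q c k * qPoch q e k) /
      (qPoch q b k * qPoch q d k * qPoch q q k) * z ^ k

/-!
Put `d = q w`, `s = qᵏ`, and let `Uₖ` be the `k`-th term of `₃φ₂(a, c, e; b, d; q, b d / (q a c e))`.
The `k`-th terms of the three series in the identity are `Uₖ` times rational functions of `s`,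
and a polynomial identity in `s` shows that the `k`-th term of `LHS - Y φ₁ - Z φ₂` is
`W_{k+1} - W_k` with `W_k = const · Uₖ (1 - qᵏ)(1 - w qᵏ)`. The series therefore telescopes to
`lim Wₖ - W₀`, and both vanish: `W₀` because of the factor `1 - q⁰`, `lim Wₖ` because `∑ Uₖ`
converges.
-/

open Filter Topology

section QPochhammer

lemma qPoch_succ (q x : ℂ) (k : ℕ) : qPoch q x (k + 1) = qPoch q x k * (1 - x * q ^ k) :=
  Finset.prod_range_succ _ _

lemma one_sub_mul_qPoch_mul_left (q x : ℂ) (k : ℕ) :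
    (1 - x) * qPoch q (q * x) k = qPoch q x k * (1 - x * q ^ k) := by
  induction k with
  | zero => simp [qPoch]
  | succ k ih =>
    rw [qPoch_succ, qPoch_succ]
    linear_combination (1 - q * x * q ^ k) * ih

lemma one_sub_mul_pow_ne_zero_of_qPoch_succ {q x : ℂ} {k : ℕ} (h : qPoch q x (k + 1) ≠ 0) :
    1 - x * q ^ k ≠ 0 :=
  right_ne_zero_of_mul (qPoch_succ q x k ▸ h)

lemma one_sub_mul_pow_ne_zero_of_norm_lt_one {q : ℂ} (hq : ‖q‖ < 1) (k : ℕ) :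
    1 - q * q ^ k ≠ 0 := by
  have hlt : ‖q ^ (k + 1)‖ < 1 := by
    rw [norm_pow]
    exact pow_lt_one₀ (norm_nonneg q) hq k.succ_ne_zero
  rw [← pow_succ', sub_ne_zero]
  intro h
  rw [← h, norm_one] at hlt
  exact lt_irrefl _ hlt

lemma tendsto_one_sub_mul_pow {q : ℂ} (hq : ‖q‖ < 1) (x : ℂ) :
    Tendsto (fun k : ℕ => 1 - x * q ^ k) atTop (𝓝 1) := by
  simpa using tendsto_const_nhds.sub ((tendsto_pow_atTop_nhds_zero_of_norm_lt_one hq).const_mul x)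

end QPochhammer

lemma summable_of_eventually_eq_mul_of_tendsto {R : Type*} [NormedRing R] [CompleteSpace R]
    {t r : ℕ → R} {L : R} (hL : ‖L‖ < 1) (hrel : ∀ᶠ k in atTop, t (k + 1) = t k * r k)
    (hr : Tendsto r atTop (𝓝 L)) : Summable t := by
  obtain ⟨ρ, hLρ, hρ1⟩ := exists_between hL
  refine summable_of_ratio_norm_eventually_le hρ1 ?_
  filter_upwards [hrel, hr.norm.eventually_lt_const hLρ] with k hk hrk
  rw [hk, mul_comm ρ]
  exact (norm_mul_le _ _).trans (mul_le_mul_of_nonneg_left hrk.le (norm_nonneg _))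

lemma HasSum.eq_sub_of_telescoping {E : Type*} [AddCommGroup E] [TopologicalSpace E]
    [IsTopologicalAddGroup E] [T2Space E] {F W : ℕ → E} {s l : E} (hF : HasSum F s)
    (hFW : ∀ k, F k = W (k + 1) - W k) (hW : Tendsto W atTop (𝓝 l)) : s = l - W 0 := by
  refine tendsto_nhds_unique hF.tendsto_sum_nat ?_
  simp_rw [hFW, Finset.sum_range_sub]
  exact hW.sub_const _

noncomputable def phi32Term (q z a c e b d : ℂ) (k : ℕ) : ℂ :=
  qPoch q a k * qPoch q c k * qPoch q e k / (qPoch q b k * qPoch q d k * qPoch q q k) * z ^ k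

lemma phi32_eq_tsum_phi32Term (q z a c e b d : ℂ) :
    phi32 q z a c e b d = ∑' k, phi32Term q z a c e b d k :=
  rfl

section Phi32Term

variable {q z a c e b d : ℂ} {k : ℕ}

lemma phi32Term_mul_pow : phi32Term q (z * q) a c e b d k = phi32Term q z a c e b d k * q ^ k := by
  simp only [phi32Term, mul_pow]
  ring

lemma one_sub_mul_phi32Term_shift_upper :
    (1 - a) * phi32Term q z (q * a) c e b d k = phi32Term q z a c e b d k * (1 - a * q ^ k) := by
  unfold phi32Term
  linear_combination (qPoch q c k * qPoch q e k / (qPoch q b k * qPoch q d k * qPoch q q k) *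
    z ^ k) * one_sub_mul_qPoch_mul_left q a k

lemma phi32Term_shift_lower (hb : qPoch q b k ≠ 0) (hqb : qPoch q (q * b) k ≠ 0)
    (hd : qPoch q d k ≠ 0) (hqd : qPoch q (q * d) k ≠ 0) :
    phi32Term q z a c e (q * b) d k * ((1 - d) * (1 - b * q ^ k)) =
      phi32Term q z a c e b (q * d) k * ((1 - b) * (1 - d * q ^ k)) := by
  unfold phi32Term
  rw [div_mul_eq_mul_div, div_mul_eq_mul_div, div_mul_eq_mul_div, div_mul_eq_mul_div]
  by_cases hQ : qPoch q q k = 0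
  · simp [hQ]
  rw [div_eq_div_iff (by positivity) (by positivity)]
  linear_combination (qPoch q a k * qPoch q c k * qPoch q e k * z ^ k * qPoch q q k) *
    (qPoch q b k * (1 - b * q ^ k) * one_sub_mul_qPoch_mul_left q d k -
      qPoch q d k * (1 - d * q ^ k) * one_sub_mul_qPoch_mul_left q b k)

lemma phi32Term_succ_mul (h : (1 - b * q ^ k) * (1 - d * q ^ k) * (1 - q * q ^ k) ≠ 0) :
    phi32Term q z a c e b d (k + 1) * ((1 - b * q ^ k) * (1 - d * q ^ k) * (1 - q * q ^ k)) =
      phi32Term q z a c e b d k * ((1 - a * q ^ k) * (1 - c * q ^ k) * (1 - e * q ^ k) * z) := by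
  simp only [phi32Term, qPoch_succ, pow_succ]
  rw [show qPoch q b k * (1 - b * q ^ k) * (qPoch q d k * (1 - d * q ^ k)) *
      (qPoch q q k * (1 - q * q ^ k)) = qPoch q b k * qPoch q d k * qPoch q q k *
      ((1 - b * q ^ k) * (1 - d * q ^ k) * (1 - q * q ^ k)) by ring,
    ← div_div, mul_right_comm, div_mul_cancel₀ _ h]
  ring

lemma summable_phi32Term (hq : ‖q‖ < 1) (hz : ‖z‖ < 1) : Summable (phi32Term q z a c e b d) := by
  have hden : Tendsto (fun k : ℕ => (1 - b * q ^ k) * (1 - d * q ^ k) * (1 - q * q ^ k)) atTop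
      (𝓝 1) := by
    simpa using ((tendsto_one_sub_mul_pow hq b).mul (tendsto_one_sub_mul_pow hq d)).mul
      (tendsto_one_sub_mul_pow hq q)
  have hnum : Tendsto (fun k : ℕ => (1 - a * q ^ k) * (1 - c * q ^ k) * (1 - e * q ^ k) * z)
      atTop (𝓝 z) := by
    simpa using (((tendsto_one_sub_mul_pow hq a).mul (tendsto_one_sub_mul_pow hq c)).mul
      (tendsto_one_sub_mul_pow hq e)).mul_const z
  refine summable_of_eventually_eq_mul_of_tendsto hz ?_ (by simpa using hnum.div hden one_ne_zero)
  filter_upwards [hden.eventually_ne one_ne_zero] with k hk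
  rw [Pi.div_apply, mul_div_assoc', eq_div_iff hk]
  exact phi32Term_succ_mul hk

end Phi32Term

def threeTermDenom (a b c e w : ℂ) : ℂ :=
  (a - w) * (a * b * c * e + b * c * w + b * w * e - b ^ 2 * w - a * c * w * e - b * c * e)

lemma threeTerm_rational_identity {a b c e w s : ℂ} (hD : threeTermDenom a b c e w ≠ 0)
    (hbs : 1 - b * s ≠ 0) :
    s - (b - a) * (b - c) * (b - e) * w / threeTermDenom a b c e w * (s * (1 - w * s) / (1 - b * s))
        - (w - b) * (a * c * e - b * w) / threeTermDenom a b c e w * (1 - a * s) =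
      b * w * (w - b) / threeTermDenom a b c e w *
          ((1 - a * s) * (1 - c * s) * (1 - e * s) / (1 - b * s))
        - a * c * e * (w - b) / threeTermDenom a b c e w * ((1 - s) * (1 - w * s)) := by
  have key : s * (1 - b * s) * threeTermDenom a b c e w =
      (b - a) * (b - c) * (b - e) * w * (s * (1 - w * s))
        + (w - b) * (a * c * e - b * w) * (1 - a * s) * (1 - b * s)
        + b * w * (w - b) * ((1 - a * s) * (1 - c * s) * (1 - e * s))
        - a * c * e * (w - b) * ((1 - s) * (1 - w * s)) * (1 - b * s) := by
    unfold threeTermDenom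
    ring
  generalize threeTermDenom a b c e w = D at hD key ⊢
  -- `field_simp` writes the denominator as `1 - s * b` and only then matches it against `hbs`
  rw [mul_comm b s] at hbs key ⊢
  field_simp
  linear_combination key

section Contiguity

variable {q a b c e w x : ℂ}

lemma phi32Term_three_term_step (hq : ‖q‖ < 1) (hx : a * c * e * x = b * w)
    (hD : threeTermDenom a b c e w ≠ 0) (h1b : 1 - b ≠ 0) (hb : ∀ k, qPoch q b k ≠ 0)
    (hqw : ∀ k, qPoch q (q * w) k ≠ 0) (hqb : ∀ k, qPoch q (q * b) k ≠ 0)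
    (hw : ∀ k, qPoch q w k ≠ 0) (k : ℕ) :
    phi32Term q (x * q) a c e b (q * w) k
        - (b - a) * (b - c) * (b - e) * w * (1 - w) / ((1 - b) * threeTermDenom a b c e w) *
          phi32Term q (x * q) a c e (q * b) w k
        - (1 - a) * (w - b) * (a * c * e - b * w) / threeTermDenom a b c e w *
          phi32Term q x (q * a) c e b (q * w) k =
      a * c * e * (w - b) / threeTermDenom a b c e w * (phi32Term q x a c e b (q * w) (k + 1) *
          ((1 - q ^ (k + 1)) * (1 - w * q ^ (k + 1))))
        - a * c * e * (w - b) / threeTermDenom a b c e w * (phi32Term q x a c e b (q * w) k *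
          ((1 - q ^ k) * (1 - w * q ^ k))) := by
  set U := phi32Term q x a c e b (q * w)
  set D := threeTermDenom a b c e w
  have hbs : 1 - b * q ^ k ≠ 0 := one_sub_mul_pow_ne_zero_of_qPoch_succ (hb (k + 1))
  have hf : phi32Term q (x * q) a c e b (q * w) k = U k * q ^ k := phi32Term_mul_pow
  have hg : (1 - w) * phi32Term q (x * q) a c e (q * b) w k =
      U k * q ^ k * (1 - b) * (1 - w * q ^ k) / (1 - b * q ^ k) := by
    rw [eq_div_iff hbs, ← hf]
    linear_combination phi32Term_shift_lower (hb k) (hqb k) (hw k) (hqw k)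
  have hU : U (k + 1) * ((1 - q ^ (k + 1)) * (1 - w * q ^ (k + 1))) =
      U k * ((1 - a * q ^ k) * (1 - c * q ^ k) * (1 - e * q ^ k) * x / (1 - b * q ^ k)) := by
    have hden : (1 - b * q ^ k) * (1 - q * w * q ^ k) * (1 - q * q ^ k) ≠ 0 :=
      mul_ne_zero (mul_ne_zero hbs (one_sub_mul_pow_ne_zero_of_qPoch_succ (hqw (k + 1))))
        (one_sub_mul_pow_ne_zero_of_norm_lt_one hq k)
    rw [mul_div_assoc', eq_div_iff hbs, ← phi32Term_succ_mul hden, pow_succ]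
    ring
  have hYg : (b - a) * (b - c) * (b - e) * w * (1 - w) / ((1 - b) * D) *
      phi32Term q (x * q) a c e (q * b) w k =
      (b - a) * (b - c) * (b - e) * w / D * (U k * (q ^ k * (1 - w * q ^ k) / (1 - b * q ^ k))) := by
    rw [show (b - a) * (b - c) * (b - e) * w * (1 - w) / ((1 - b) * D) *
        phi32Term q (x * q) a c e (q * b) w k = (b - a) * (b - c) * (b - e) * w / ((1 - b) * D) *
        ((1 - w) * phi32Term q (x * q) a c e (q * b) w k) by ring, hg]
    field_simp
  have hZh : (1 - a) * (w - b) * (a * c * e - b * w) / D * phi32Term q x (q * a) c e b (q * w) k =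
      (w - b) * (a * c * e - b * w) / D * (U k * (1 - a * q ^ k)) := by
    rw [← one_sub_mul_phi32Term_shift_upper]
    ring
  have hW : a * c * e * (w - b) / D * (U (k + 1) * ((1 - q ^ (k + 1)) * (1 - w * q ^ (k + 1)))) =
      b * w * (w - b) / D * (U k * ((1 - a * q ^ k) * (1 - c * q ^ k) * (1 - e * q ^ k) /
        (1 - b * q ^ k))) := by
    rw [hU, ← hx]
    ring
  rw [hf, hYg, hZh, hW]
  linear_combination U k * threeTerm_rational_identity hD hbs

theorem phi32_three_term (hq : ‖q‖ < 1) (hxn : ‖x‖ < 1) (hx : a * c * e * x = b * w)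
    (hD : threeTermDenom a b c e w ≠ 0) (h1b : 1 - b ≠ 0) (hb : ∀ k, qPoch q b k ≠ 0)
    (hqw : ∀ k, qPoch q (q * w) k ≠ 0) (hqb : ∀ k, qPoch q (q * b) k ≠ 0)
    (hw : ∀ k, qPoch q w k ≠ 0) :
    phi32 q (x * q) a c e b (q * w) =
      (b - a) * (b - c) * (b - e) * w * (1 - w) / ((1 - b) * threeTermDenom a b c e w) *
          phi32 q (x * q) a c e (q * b) w +
        (1 - a) * (w - b) * (a * c * e - b * w) / threeTermDenom a b c e w *
          phi32 q x (q * a) c e b (q * w) := by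
  have hxq : ‖x * q‖ < 1 := by
    rw [norm_mul]
    exact mul_lt_one_of_nonneg_of_lt_one_left (norm_nonneg x) hxn hq.le
  have hW : Tendsto (fun k => a * c * e * (w - b) / threeTermDenom a b c e w *
      (phi32Term q x a c e b (q * w) k * ((1 - q ^ k) * (1 - w * q ^ k)))) atTop (𝓝 0) := by
    simpa using ((summable_phi32Term hq hxn).tendsto_atTop_zero.mul
      ((tendsto_one_sub_mul_pow hq 1).mul (tendsto_one_sub_mul_pow hq w))).const_mul
      (a * c * e * (w - b) / threeTermDenom a b c e w)
  have htel := HasSum.eq_sub_of_telescoping (((summable_phi32Term hq hxq).hasSum.sub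
    ((summable_phi32Term hq hxq).hasSum.mul_left _)).sub
    ((summable_phi32Term hq hxn).hasSum.mul_left _))
    (phi32Term_three_term_step hq hx hD h1b hb hqw hqb hw) hW
  simp only [pow_zero, sub_self, zero_mul, mul_zero] at htel
  simp only [phi32_eq_tsum_phi32Term]
  linear_combination htel

end Contiguity

theorem threeTerm_AA4 (q a b c d e Y Z : ℂ)
    (hq0 : 0 < ‖q‖) (hq1 : ‖q‖ < 1)
    (ha : a ≠ 0) (hc : c ≠ 0) (he : e ≠ 0)
    (hconv : ‖b * d / (q * a * c * e)‖ < 1)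
    (hY : Y = (a - b) * (b - c) * (b - e) * (d - q) * d / ((1 - b) * (q * a - d) * (q * a * b * c * e + b * c * d + b * d * e - b ^ 2 * d - a * c * d * e - q * b * c * e)))
    (hZ : Z = (1 - a) * (d - q * b) * (q * a * c * e - b * d) / ((q * a - d) * (q * a * b * c * e + b * c * d + b * d * e - b ^ 2 * d - a * c * d * e - q * b * c * e)))
    (h1 : 1 - b ≠ 0) (h2 : q * a - d ≠ 0) (h3 : q * a * b * c * e + b * c * d + b * d * e - b ^ 2 * d - a * c * d * e - q * b * c * e ≠ 0)
    (hp0 : ∀ k, qPoch q (b) k ≠ 0) (hp1 : ∀ k, qPoch q (d) k ≠ 0) (hp2 : ∀ k, qPoch q (q * b) k ≠ 0) (hp3 : ∀ k, qPoch q (d / q) k ≠ 0) :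
    phi32 q (b * d / (a * c * e)) a c e b d =
      Y * phi32 q (b * d / (a * c * e)) a c e (q * b) (d / q) +
      Z * phi32 q (b * d / (q * a * c * e)) (q * a) c e b d := by
  have hq : q ≠ 0 := norm_pos_iff.mp hq0
  obtain ⟨w, rfl⟩ : ∃ w, d = q * w := ⟨d / q, by field_simp⟩
  have hD : q ^ 2 * threeTermDenom a b c e w ≠ 0 := by
    convert mul_ne_zero h2 h3 using 1
    unfold threeTermDenom
    ring
  have hz : b * (q * w) / (a * c * e) = b * w / (a * c * e) * q := by ring
  have hzq : b * (q * w) / (q * a * c * e) = b * w / (a * c * e) := by field_simp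
  rw [hzq] at hconv
  rw [mul_div_cancel_left₀ w hq] at hp3 ⊢
  rw [hz, hzq, phi32_three_term hq1 hconv (by field_simp) (right_ne_zero_of_mul hD) h1 hp0 hp1
    hp2 hp3, hY, hZ]
  unfold threeTermDenom
  field_simp
  ring
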